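/- arXiv:1602.00042 — 3 statements merged into one kernel-verified Lean document; each statement's English description precedes it below -/
import Mathlib

section
/- Let L>0 and let Ω=(0,L)×(-1,1). Suppose u=(u₁,u₂) is a continuously differentiable vector field on a neighborhood of the closure of Ω which is divergence-free (∂₁u₁+∂₂u₂=0 on Ω), satisfies u₂(x₁,0)=0 for all x₁∈(0,L), and satisfies the symmetries u₁(x₁,-x₂)=u₁(x₁,x₂) and u₂(x₁,-x₂)=-u₂(x₁,x₂) for (x₁,x₂)∈(0,L)×(0,1). Then ∫_Ω |u₂(x)|² dx ≤ ∫_Ω |∇u₁(x)|² dx. -/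
/-!
Fix `x₁`. Since `u₂(x₁, 0) = 0` and `∂₂u₂ = -∂₁u₁`, the fundamental theorem of calculus gives
`u₂(x₁, y) = -∫₀^y ∂₁u₁(x₁, r) dr`, so by Cauchy–Schwarz
`u₂(x₁, y)² ≤ |y| ∫₋₁¹ (∂₁u₁)²(x₁, r) dr`. Integrating in `y` over `(-1, 1)`, where `∫ |y| = 1`,
and then in `x₁` (Fubini) bounds `‖u₂‖²` by `‖∂₁u₁‖² ≤ ‖∇u₁‖²`.
-/

open MeasureTheory Real Filter

noncomputable section

/-- First partial derivative. -/
def d1 (f : ℝ × ℝ → ℝ) (p : ℝ × ℝ) : ℝ := fderiv ℝ f p (1, 0)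

/-- Second partial derivative. -/
def d2 (f : ℝ × ℝ → ℝ) (p : ℝ × ℝ) : ℝ := fderiv ℝ f p (0, 1)

/-- Laplacian. -/
def lap (f : ℝ × ℝ → ℝ) (p : ℝ × ℝ) : ℝ := d1 (d1 f) p + d2 (d2 f) p

/-- The domain Ω = (0,L) × (-1,1). -/
def Omg (L : ℝ) : Set (ℝ × ℝ) := Set.Ioo 0 L ×ˢ Set.Ioo (-1) 1

/-- Squared L² norm over Ω. -/
def nrmSq (L : ℝ) (f : ℝ × ℝ → ℝ) : ℝ := ∫ p in Omg L, (f p) ^ 2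

/-- L² norm over Ω. -/
def nrm (L : ℝ) (f : ℝ × ℝ → ℝ) : ℝ := Real.sqrt (nrmSq L f)

/-- Squared L² norm of the gradient over Ω. -/
def gradNrmSq (L : ℝ) (f : ℝ × ℝ → ℝ) : ℝ := ∫ p in Omg L, ((d1 f p) ^ 2 + (d2 f p) ^ 2)

/-- L² norm of the gradient over Ω. -/
def gradNrm (L : ℝ) (f : ℝ × ℝ → ℝ) : ℝ := Real.sqrt (gradNrmSq L f)

/-- Squared L² norm of the Laplacian over Ω. -/
def lapNrmSq (L : ℝ) (f : ℝ × ℝ → ℝ) : ℝ := ∫ p in Omg L, (lap f p) ^ 2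

/-- L² norm of the Laplacian over Ω. -/
def lapNrm (L : ℝ) (f : ℝ × ℝ → ℝ) : ℝ := Real.sqrt (lapNrmSq L f)

/-- Ω-periodic: L-periodic in x₁ and 2-periodic in x₂. -/
def OmgPeriodic (L : ℝ) (f : ℝ × ℝ → ℝ) : Prop :=
  (∀ x y : ℝ, f (x + L, y) = f (x, y)) ∧ (∀ x y : ℝ, f (x, y + 2) = f (x, y))

/-- Divergence-free vector field. -/
def DivFree (u₁ u₂ : ℝ × ℝ → ℝ) : Prop := ∀ p, d1 u₁ p + d2 u₂ p = 0

/-- Symmetric vector field: first component even in x₂, second odd in x₂. -/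
def Symm (u₁ u₂ : ℝ × ℝ → ℝ) : Prop :=
  (∀ x y : ℝ, u₁ (x, -y) = u₁ (x, y)) ∧ (∀ x y : ℝ, u₂ (x, -y) = -u₂ (x, y))

open Set
open scoped Interval

theorem sq_setIntegral_le_measureReal_mul {α : Type*} [MeasurableSpace α] {μ : Measure α}
    {s : Set α} {f : α → ℝ} (hs : μ s ≠ ⊤) (hf : IntegrableOn f s μ)
    (hf2 : IntegrableOn (fun x => f x ^ 2) s μ) :
    (∫ x in s, f x ∂μ) ^ 2 ≤ μ.real s * ∫ x in s, f x ^ 2 ∂μ := by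
  rcases eq_or_ne (μ s) 0 with h0 | h0
  · simp [Measure.restrict_eq_zero.2 h0]
  have hm : 0 < μ.real s := ENNReal.toReal_pos h0 hs
  have hjensen := (even_two.convexOn_pow (𝕜 := ℝ)).map_set_average_le
    (continuous_pow 2).continuousOn isClosed_univ h0 hs (by simp) hf hf2
  rw [setAverage_eq, setAverage_eq, smul_eq_mul, smul_eq_mul] at hjensen
  have hscaled := mul_le_mul_of_nonneg_left hjensen (sq_nonneg (μ.real s))
  field_simp at hscaled
  linarith

theorem setIntegral_abs_Ioo_neg_one_one : ∫ y in Ioo (-1 : ℝ) 1, |y| = 1 := by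
  rw [setIntegral_congr_set Ioo_ae_eq_Ioc, ← intervalIntegral.integral_of_le (by norm_num),
    ← intervalIntegral.integral_add_adjacent_intervals (b := 0)
      (continuous_abs.intervalIntegrable _ _) (continuous_abs.intervalIntegrable _ _),
    intervalIntegral.integral_congr (g := fun y => -y) fun y hy => abs_of_nonpos (by
      simp only [uIcc_of_le (show (-1 : ℝ) ≤ 0 by norm_num)] at hy; exact hy.2),
    intervalIntegral.integral_congr (g := fun y => y) fun y hy => abs_of_nonneg (by
      simp only [uIcc_of_le zero_le_one] at hy; exact hy.1),
    intervalIntegral.integral_neg, integral_id, integral_id]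
  norm_num

theorem sq_le_abs_mul_setIntegral_sq_deriv {f g : ℝ → ℝ} (hf0 : f 0 = 0)
    (hf : ∀ y ∈ Ioo (-1 : ℝ) 1, HasDerivAt f (g y) y) (hg : ContinuousOn g (Icc (-1) 1))
    {y : ℝ} (hy : y ∈ Ioo (-1 : ℝ) 1) :
    f y ^ 2 ≤ |y| * ∫ r in Ioo (-1 : ℝ) 1, g r ^ 2 := by
  have hsub : uIcc 0 y ⊆ Ioo (-1) 1 := ordConnected_Ioo.uIcc_subset (by norm_num) hy
  have hgy : ContinuousOn g (uIcc 0 y) := hg.mono (hsub.trans Ioo_subset_Icc_self)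
  have hftc : f y = ∫ r in 0..y, g r := by
    rw [intervalIntegral.integral_eq_sub_of_hasDerivAt (fun r hr => hf r (hsub hr))
      hgy.intervalIntegrable, hf0, sub_zero]
  calc f y ^ 2 = (∫ r in Ι 0 y, g r) ^ 2 := by
        rw [hftc, ← sq_abs, intervalIntegral.abs_integral_eq_abs_integral_uIoc, sq_abs]
    _ ≤ volume.real (Ι 0 y) * ∫ r in Ι 0 y, g r ^ 2 :=
        sq_setIntegral_le_measureReal_mul (by simp [Real.volume_uIoc])
          (hgy.integrableOn_uIcc.mono_set uIoc_subset_uIcc)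
          ((hgy.pow 2).integrableOn_uIcc.mono_set uIoc_subset_uIcc)
    _ ≤ |y| * ∫ r in Ioo (-1 : ℝ) 1, g r ^ 2 := by
        rw [measureReal_def, Real.volume_uIoc, sub_zero, ENNReal.toReal_ofReal (abs_nonneg y)]
        gcongr
        · exact ae_of_all _ fun r => sq_nonneg _
        · exact ((hg.pow 2).integrableOn_Icc).mono_set Ioo_subset_Icc_self
        · exact uIoc_subset_uIcc.trans hsub

theorem setIntegral_sq_le_setIntegral_sq_deriv {f g : ℝ → ℝ} (hf0 : f 0 = 0)
    (hf : ∀ y ∈ Ioo (-1 : ℝ) 1, HasDerivAt f (g y) y) (hg : ContinuousOn g (Icc (-1) 1)) :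
    ∫ y in Ioo (-1 : ℝ) 1, f y ^ 2 ≤ ∫ y in Ioo (-1 : ℝ) 1, g y ^ 2 :=
  calc ∫ y in Ioo (-1 : ℝ) 1, f y ^ 2
      ≤ ∫ y in Ioo (-1 : ℝ) 1, |y| * ∫ r in Ioo (-1 : ℝ) 1, g r ^ 2 :=
        integral_mono_of_nonneg (.of_forall fun y => sq_nonneg _)
          ((Continuous.integrableOn_Icc (μ := volume) (by fun_prop)).mono_set Ioo_subset_Icc_self)
          (ae_restrict_of_forall_mem measurableSet_Ioo fun y hy =>
            sq_le_abs_mul_setIntegral_sq_deriv hf0 hf hg hy)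
    _ = ∫ y in Ioo (-1 : ℝ) 1, g y ^ 2 := by
        rw [integral_mul_const, setIntegral_abs_Ioo_neg_one_one, one_mul]

theorem setIntegral_prod_mono_of_slices {α β : Type*} [MeasurableSpace α] [MeasurableSpace β]
    {μ : Measure α} {ν : Measure β} [SFinite μ] [SFinite ν] {f g : α × β → ℝ}
    {s : Set α} {t : Set β}
    (hs : MeasurableSet s) (hf : IntegrableOn f (s ×ˢ t) (μ.prod ν))
    (hg : IntegrableOn g (s ×ˢ t) (μ.prod ν))
    (h : ∀ x ∈ s, ∫ y in t, f (x, y) ∂ν ≤ ∫ y in t, g (x, y) ∂ν) :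
    ∫ z in s ×ˢ t, f z ∂μ.prod ν ≤ ∫ z in s ×ˢ t, g z ∂μ.prod ν := by
  rw [setIntegral_prod f hf, setIntegral_prod g hg]
  rw [IntegrableOn, ← Measure.prod_restrict] at hf hg
  exact setIntegral_mono_on hf.integral_prod_left hg.integral_prod_left hs h

theorem DifferentiableAt.hasDerivAt_d2 {f : ℝ × ℝ → ℝ} {x y : ℝ}
    (hf : DifferentiableAt ℝ f (x, y)) : HasDerivAt (fun r => f (x, r)) (d2 f (x, y)) y :=
  hf.hasFDerivAt.comp_hasDerivAt y ((hasDerivAt_const y x).prodMk (hasDerivAt_id y))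

theorem mk_mem_closure_Omg {L x y : ℝ} (hx : x ∈ Ioo 0 L) (hy : y ∈ Icc (-1) 1) :
    (x, y) ∈ closure (Omg L) := by
  rw [Omg, closure_prod_eq, closure_Ioo (by norm_num : (-1 : ℝ) ≠ 1)]
  exact ⟨subset_closure hx, hy⟩

theorem ContinuousOn.integrableOn_Omg {L : ℝ} {f : ℝ × ℝ → ℝ}
    (hf : ContinuousOn f (closure (Omg L))) : IntegrableOn f (Omg L) :=
  (hf.integrableOn_compact ((Metric.isBounded_Ioo _ _).prod
    (Metric.isBounded_Ioo _ _)).isCompact_closure).mono_set subset_closure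

theorem vertical_component_bound_general (L : ℝ) (u₁ u₂ : ℝ × ℝ → ℝ)
    (U : Set (ℝ × ℝ)) (hU : IsOpen U) (hUc : closure (Omg L) ⊆ U)
    (hu₁ : ContDiffOn ℝ 1 u₁ U) (hu₂ : ContDiffOn ℝ 1 u₂ U)
    (hdiv : ∀ p ∈ Omg L, d1 u₁ p + d2 u₂ p = 0)
    (hbc : ∀ x ∈ Set.Ioo (0 : ℝ) L, u₂ (x, 0) = 0) :
    nrmSq L u₂ ≤ gradNrmSq L u₁ := by
  have hd1 : ContinuousOn (d1 u₁) U :=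
    (hu₁.continuousOn_fderiv_of_isOpen hU le_rfl).clm_apply continuousOn_const
  have hd2 : ContinuousOn (d2 u₁) U :=
    (hu₁.continuousOn_fderiv_of_isOpen hU le_rfl).clm_apply continuousOn_const
  have hslice : ∀ x ∈ Ioo 0 L,
      ∫ y in Ioo (-1 : ℝ) 1, u₂ (x, y) ^ 2 ≤ ∫ y in Ioo (-1 : ℝ) 1, d1 u₁ (x, y) ^ 2 := by
    intro x hx
    have hxU : ∀ y ∈ Icc (-1 : ℝ) 1, (x, y) ∈ U := fun y hy => hUc (mk_mem_closure_Omg hx hy)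
    have hderiv : ∀ y ∈ Ioo (-1 : ℝ) 1,
        HasDerivAt (fun r => u₂ (x, r)) (-d1 u₁ (x, y)) y := fun y hy => by
      rw [neg_eq_of_add_eq_zero_right (hdiv _ ⟨hx, hy⟩)]
      exact ((hu₂.differentiableOn one_ne_zero).differentiableAt
        (hU.mem_nhds (hxU y (Ioo_subset_Icc_self hy)))).hasDerivAt_d2
    have hcont : ContinuousOn (fun r => -d1 u₁ (x, r)) (Icc (-1) 1) :=
      (hd1.comp (Continuous.prodMk_right x).continuousOn hxU).neg
    simpa only [neg_sq] using setIntegral_sq_le_setIntegral_sq_deriv (hbc x hx) hderiv hcont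
  have hd1_int : IntegrableOn (fun p => d1 u₁ p ^ 2) (Omg L) :=
    ((hd1.mono hUc).pow 2).integrableOn_Omg
  calc nrmSq L u₂ ≤ ∫ p in Omg L, d1 u₁ p ^ 2 :=
        setIntegral_prod_mono_of_slices measurableSet_Ioo
          ((hu₂.continuousOn.mono hUc).pow 2).integrableOn_Omg hd1_int hslice
    _ ≤ gradNrmSq L u₁ :=
        setIntegral_mono hd1_int (hd1_int.add ((hd2.mono hUc).pow 2).integrableOn_Omg)
          fun p => le_add_of_nonneg_right (sq_nonneg _)

/-- Lemma 2.5 of the paper. If `u = (u₁, u₂)` is a C¹ divergence-free vector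
field on a neighborhood of the closure of `Ω = (0,L) × (-1,1)` with `u₂(x₁,0) = 0`,
`u₁` even and `u₂` odd across `x₂ = 0`, then `‖u₂‖_{L²(Ω)}² ≤ ‖∇u₁‖_{L²(Ω)}²`. -/
theorem vertical_component_bound (L : ℝ) (hL : 0 < L) (u₁ u₂ : ℝ × ℝ → ℝ)
    (U : Set (ℝ × ℝ)) (hU : IsOpen U) (hUc : closure (Omg L) ⊆ U)
    (hu₁ : ContDiffOn ℝ 1 u₁ U) (hu₂ : ContDiffOn ℝ 1 u₂ U)
    (hdiv : ∀ p ∈ Omg L, d1 u₁ p + d2 u₂ p = 0)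
    (hbc : ∀ x ∈ Set.Ioo (0 : ℝ) L, u₂ (x, 0) = 0)
    (hsym1 : ∀ x ∈ Set.Ioo (0 : ℝ) L, ∀ y ∈ Set.Ioo (0 : ℝ) 1, u₁ (x, -y) = u₁ (x, y))
    (hsym2 : ∀ x ∈ Set.Ioo (0 : ℝ) L, ∀ y ∈ Set.Ioo (0 : ℝ) 1, u₂ (x, -y) = -u₂ (x, y)) :
    nrmSq L u₂ ≤ gradNrmSq L u₁ :=
  vertical_component_bound_general L u₁ u₂ U hU hUc hu₁ hu₂ hdiv hbc
end
end

section
/- Let L>0. Suppose u=(u₁,u₂) is a continuously differentiable vector field on a neighborhood of [0,L]×[0,1] which is divergence-free (∂₁u₁+∂₂u₂=0) and satisfies u₂(x₁,0)=0 for all x₁∈[0,L]. Then for every (x₁,x₂)∈[0,L]×[0,1], |u₂(x₁,x₂)|² ≤ ∫₀¹ |∂₁u₁(x₁,s)|² ds. -/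
/-
Along the vertical segment through `x`, `u₂(x, y) = ∫₀^y ∂₂u₂(x, s) ds` because `u₂(x, 0) = 0`;
Cauchy–Schwarz on `[0, y] ⊆ [0, 1]` bounds its square by `∫₀¹ |∂₂u₂(x, s)|² ds`, and
`∂₂u₂ = -∂₁u₁` by the divergence condition.
-/

open MeasureTheory Real Filter

noncomputable section

open Set

section CauchySchwarz

variable {f g g' : ℝ → ℝ} {a b : ℝ}

theorem sq_intervalIntegral_le_mul_intervalIntegral_sq (hab : a ≤ b)
    (hf : IntervalIntegrable f volume a b)
    (hf2 : IntervalIntegrable (fun t ↦ f t ^ 2) volume a b) :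
    (∫ t in a..b, f t) ^ 2 ≤ (b - a) * ∫ t in a..b, f t ^ 2 := by
  obtain rfl | hab := hab.eq_or_lt
  · simp
  set I := ∫ t in a..b, f t
  -- Expand `0 ≤ ∫ (f - c)²` at the mean value `c` of `f`.
  set c := I / (b - a)
  have hexpand :
      ∫ t in a..b, (f t - c) ^ 2 = (∫ t in a..b, f t ^ 2) - 2 * c * I + c ^ 2 * (b - a) := by
    have hpoly : ∀ t, (f t - c) ^ 2 = f t ^ 2 - 2 * c * f t + c ^ 2 := fun t ↦ by ring
    simp_rw [hpoly]
    rw [intervalIntegral.integral_add (hf2.sub (hf.const_mul _)) intervalIntegrable_const,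
      intervalIntegral.integral_sub hf2 (hf.const_mul _), intervalIntegral.integral_const_mul,
      intervalIntegral.integral_const, smul_eq_mul]
    ring
  have hnonneg : 0 ≤ ∫ t in a..b, (f t - c) ^ 2 :=
    intervalIntegral.integral_nonneg hab.le fun t _ ↦ sq_nonneg _
  have hI : I = c * (b - a) := (div_mul_cancel₀ I (sub_pos.2 hab).ne').symm
  rw [hexpand] at hnonneg
  rw [hI] at hnonneg ⊢
  nlinarith [sub_pos.2 hab]

theorem sq_sub_le_mul_integral_sq_deriv (hab : a ≤ b)
    (hg : ∀ t ∈ Icc a b, HasDerivAt g (g' t) t)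
    (hg' : ContinuousOn g' (Icc a b)) :
    (g b - g a) ^ 2 ≤ (b - a) * ∫ t in a..b, g' t ^ 2 := by
  rw [← intervalIntegral.integral_eq_sub_of_hasDerivAt (by rwa [uIcc_of_le hab])
    (hg'.intervalIntegrable_of_Icc hab)]
  exact sq_intervalIntegral_le_mul_intervalIntegral_sq hab (hg'.intervalIntegrable_of_Icc hab)
    ((hg'.pow 2).intervalIntegrable_of_Icc hab)

end CauchySchwarz

theorem hasDerivAt_d2 {u : ℝ × ℝ → ℝ} {x s : ℝ} (hu : DifferentiableAt ℝ u (x, s)) :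
    HasDerivAt (fun t ↦ u (x, t)) (d2 u (x, s)) s := by
  have hline : HasDerivAt (fun t : ℝ ↦ (x, t)) ((0 : ℝ), (1 : ℝ)) s :=
    (hasDerivAt_const s x).prodMk (hasDerivAt_id s)
  exact hu.hasFDerivAt.comp_hasDerivAt s hline

theorem ContDiffOn.continuousOn_d2 {u : ℝ × ℝ → ℝ} {U : Set (ℝ × ℝ)}
    (hu : ContDiffOn ℝ 1 u U) (hU : IsOpen U) : ContinuousOn (d2 u) U :=
  (ContinuousLinearMap.apply ℝ ℝ ((0 : ℝ), (1 : ℝ))).continuous.comp_continuousOn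
    (hu.continuousOn_fderiv_of_isOpen hU le_rfl)

theorem pointwise_vertical_bound_general (L : ℝ) (u₁ u₂ : ℝ × ℝ → ℝ)
    (U : Set (ℝ × ℝ)) (hU : IsOpen U)
    (hUc : (Set.Icc (0 : ℝ) L ×ˢ Set.Icc (0 : ℝ) 1) ⊆ U)
    (hu₂ : ContDiffOn ℝ 1 u₂ U)
    (hdiv : ∀ p ∈ U, d1 u₁ p + d2 u₂ p = 0)
    (hbc : ∀ x ∈ Set.Icc (0 : ℝ) L, u₂ (x, 0) = 0) :
    ∀ x ∈ Set.Icc (0 : ℝ) L, ∀ y ∈ Set.Icc (0 : ℝ) 1,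
      (u₂ (x, y)) ^ 2 ≤ ∫ s in (0 : ℝ)..1, (d1 u₁ (x, s)) ^ 2 := by
  intro x hx y hy
  have hseg : ∀ s ∈ Icc (0 : ℝ) 1, (x, s) ∈ U := fun s hs ↦ hUc ⟨hx, hs⟩
  have hderiv : ∀ s ∈ Icc 0 y, HasDerivAt (fun t ↦ u₂ (x, t)) (d2 u₂ (x, s)) s :=
    fun s hs ↦ hasDerivAt_d2 <| (hu₂.differentiableOn one_ne_zero).differentiableAt <|
      hU.mem_nhds (hseg s ⟨hs.1, hs.2.trans hy.2⟩)
  have hcont : ContinuousOn (fun s ↦ d2 u₂ (x, s)) (Icc 0 1) :=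
    (hu₂.continuousOn_d2 hU).comp (by fun_prop) hseg
  have hdiv_sq :
      ∫ s in (0 : ℝ)..1, (d1 u₁ (x, s)) ^ 2 = ∫ s in (0 : ℝ)..1, (d2 u₂ (x, s)) ^ 2 :=
    intervalIntegral.integral_congr fun s hs ↦ by
      rw [uIcc_of_le zero_le_one] at hs
      rw [eq_neg_of_add_eq_zero_left (hdiv _ (hseg s hs)), neg_sq]
  calc (u₂ (x, y)) ^ 2 = (u₂ (x, y) - u₂ (x, 0)) ^ 2 := by rw [hbc x hx, sub_zero]
    _ ≤ (y - 0) * ∫ s in (0 : ℝ)..y, (d2 u₂ (x, s)) ^ 2 :=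
      sq_sub_le_mul_integral_sq_deriv hy.1 hderiv (hcont.mono (Icc_subset_Icc_right hy.2))
    _ ≤ 1 * ∫ s in (0 : ℝ)..1, (d2 u₂ (x, s)) ^ 2 :=
      mul_le_mul (by linarith [hy.2]) (intervalIntegral.integral_mono_interval le_rfl hy.1 hy.2
          (.of_forall fun _ ↦ sq_nonneg _) ((hcont.pow 2).intervalIntegrable_of_Icc zero_le_one))
        (intervalIntegral.integral_nonneg hy.1 fun _ _ ↦ sq_nonneg _) zero_le_one
    _ = ∫ s in (0 : ℝ)..1, (d1 u₁ (x, s)) ^ 2 := by rw [one_mul, hdiv_sq]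

/-- pointwise bound on the vertical component of a divergence-free C¹ vector
field vanishing on `{x₂ = 0}`:  `|u₂(x₁,x₂)|² ≤ ∫₀¹ |∂₁u₁(x₁,s)|² ds`. -/
theorem pointwise_vertical_bound (L : ℝ) (hL : 0 < L) (u₁ u₂ : ℝ × ℝ → ℝ)
    (U : Set (ℝ × ℝ)) (hU : IsOpen U)
    (hUc : (Set.Icc (0 : ℝ) L ×ˢ Set.Icc (0 : ℝ) 1) ⊆ U)
    (hu₁ : ContDiffOn ℝ 1 u₁ U) (hu₂ : ContDiffOn ℝ 1 u₂ U)
    (hdiv : ∀ p ∈ U, d1 u₁ p + d2 u₂ p = 0)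
    (hbc : ∀ x ∈ Set.Icc (0 : ℝ) L, u₂ (x, 0) = 0) :
    ∀ x ∈ Set.Icc (0 : ℝ) L, ∀ y ∈ Set.Icc (0 : ℝ) 1,
      (u₂ (x, y)) ^ 2 ≤ ∫ s in (0 : ℝ)..1, (d1 u₁ (x, s)) ^ 2 :=
  pointwise_vertical_bound_general L u₁ u₂ U hU hUc hu₂ hdiv hbc
end
end

section
/- Let τ>0 and γ>0. Suppose Y:[0,∞)→[0,∞) is nonnegative and locally absolutely continuous, α,β:[0,∞)→ℝ are locally integrable, and Y'(t)+α(t)Y(t) ≤ β(t) for almost every t∈(0,∞). Assume liminf_{t→∞} ∫_t^{t+τ} α(s) ds ≥ γ, limsup_{t→∞} ∫_t^{t+τ} α⁻(s) ds < ∞, and lim_{t→∞} ∫_t^{t+τ} β⁺(s) ds = 0, where α⁻=max{-α,0} and β⁺=max{β,0}. Then Y(t)→0 as t→∞. -/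
open MeasureTheory Real Filter

noncomputable section

open Set Topology

/-! Multiplying by the integrating factor `exp (∫ₛʳ α)` turns the differential inequality into
`Y t ≤ Y s exp (-∫ₛᵗ α) + exp (∫ₛᵗ α⁻) ∫ₛᵗ β⁺` on every interval `[s, t] ⊆ [0, ∞)`. On windows of
length `τ` far out this is a contraction `Y (t + τ) ≤ exp (-γ/2) Y t + ε t` with `ε t → 0`, and
iterating it along `t₀ + nτ`, with `Y` bounded on the first window, drives `Y` to `0`. -/

theorem AbsolutelyContinuousOnInterval.congr {X : Type*} [PseudoMetricSpace X] {f g : ℝ → X}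
    {a b : ℝ} (hf : AbsolutelyContinuousOnInterval f a b) (hfg : EqOn f g (uIcc a b)) :
    AbsolutelyContinuousOnInterval g a b := by
  refine hf.congr' (eventually_inf_principal.2 (Eventually.of_forall fun E hE => ?_))
  refine Finset.sum_congr rfl fun i hi => ?_
  rw [hfg (hE.1 i hi).1, hfg (hE.1 i hi).2]

theorem LocallyLipschitz.comp_absolutelyContinuousOnInterval {F X : Type*}
    [SeminormedAddCommGroup F] [PseudoMetricSpace X] {g : F → X} {f : ℝ → F} {a b : ℝ}
    (hg : LocallyLipschitz g) (hf : AbsolutelyContinuousOnInterval f a b) :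
    AbsolutelyContinuousOnInterval (g ∘ f) a b := by
  have hcpt : IsCompact (f '' uIcc a b) := isCompact_uIcc.image_of_continuousOn hf.continuousOn
  obtain ⟨K, hK⟩ := hg.locallyLipschitzOn.exists_lipschitzOnWith_of_compact hcpt
  refine squeeze_zero' (Eventually.of_forall fun E => Finset.sum_nonneg fun i _ => dist_nonneg)
    ?_ (by simpa using (show Tendsto _ _ _ from hf).const_mul (K : ℝ))
  refine eventually_inf_principal.2 (Eventually.of_forall fun E hE => ?_)
  rw [Finset.mul_sum]
  exact Finset.sum_le_sum fun i hi => hK.dist_le_mul _ (mem_image_of_mem f (hE.1 i hi).1) _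
    (mem_image_of_mem f (hE.1 i hi).2)

theorem absolutelyContinuousOnInterval_of_eq_add_integral {Y Y' : ℝ → ℝ} {a b : ℝ}
    (hY' : IntervalIntegrable Y' volume a b)
    (hY : ∀ r ∈ uIcc a b, Y r = Y a + ∫ u in a..r, Y' u) :
    AbsolutelyContinuousOnInterval Y a b :=
  ((LipschitzWith.const (Y a)).lipschitzOnWith.absolutelyContinuousOnInterval.fun_add
    (hY'.absolutelyContinuousOnInterval_intervalIntegral left_mem_uIcc)).congr
    fun r hr => (hY r hr).symm

theorem ae_hasDerivAt_of_eq_add_integral {E : Type*} [NormedAddCommGroup E] [NormedSpace ℝ E]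
    [CompleteSpace E] {Y Y' : ℝ → E} {a b : ℝ} (hY' : IntervalIntegrable Y' volume a b)
    (hY : ∀ r ∈ uIcc a b, Y r = Y a + ∫ u in a..r, Y' u) :
    ∀ᵐ r, r ∈ Ioo a b → HasDerivAt Y (Y' r) r := by
  filter_upwards [hY'.ae_hasDerivAt_integral] with r hr hrab
  have hr_mem : r ∈ uIcc a b := Ioo_subset_Icc_self.trans Icc_subset_uIcc hrab
  refine ((hr hr_mem a left_mem_uIcc).const_add (Y a)).congr_of_eventuallyEq ?_
  filter_upwards [Ioo_mem_nhds hrab.1 hrab.2] with x hx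
  exact hY x (Ioo_subset_Icc_self.trans Icc_subset_uIcc hx)

theorem IntervalIntegrable.pos_part {f : ℝ → ℝ} {a b : ℝ} (hf : IntervalIntegrable f volume a b) :
    IntervalIntegrable (fun x => max (f x) 0) volume a b :=
  ⟨hf.1.pos_part, hf.2.pos_part⟩

theorem intervalIntegral.integral_le_integral_add_integral_neg_part {f : ℝ → ℝ} {s r t : ℝ}
    (hsr : s ≤ r) (hrt : r ≤ t) (hf : IntervalIntegrable f volume s t) :
    ∫ x in s..r, f x ≤ (∫ x in s..t, f x) + ∫ x in s..t, max (-f x) 0 := by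
  have hr : r ∈ uIcc s t := Icc_subset_uIcc ⟨hsr, hrt⟩
  have hfneg : IntervalIntegrable (fun x => max (-f x) 0) volume s t := hf.neg.pos_part
  have hsplit := integral_add_adjacent_intervals (hf.mono_set (uIcc_subset_uIcc_left hr))
    (hf.mono_set (uIcc_subset_uIcc_right hr))
  have hsplitneg := integral_add_adjacent_intervals (hfneg.mono_set (uIcc_subset_uIcc_left hr))
    (hfneg.mono_set (uIcc_subset_uIcc_right hr))
  have hneg : ∫ x in r..t, -f x ≤ ∫ x in r..t, max (-f x) 0 :=
    integral_mono_on hrt (hf.mono_set (uIcc_subset_uIcc_right hr)).neg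
      (hfneg.mono_set (uIcc_subset_uIcc_right hr)) fun x _ => le_max_left _ _
  rw [integral_neg] at hneg
  have hpos : 0 ≤ ∫ x in s..r, max (-f x) 0 := integral_nonneg hsr fun x _ => le_max_right _ _
  linarith

theorem AbsolutelyContinuousOnInterval.le_of_ae_deriv_add_mul_le {Y α β : ℝ → ℝ} {s t : ℝ}
    (hst : s ≤ t) (hY : AbsolutelyContinuousOnInterval Y s t)
    (hα : IntervalIntegrable α volume s t) (hβ : IntervalIntegrable β volume s t)
    (hineq : ∀ᵐ r, r ∈ Ioo s t → deriv Y r + α r * Y r ≤ β r) :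
    Y t ≤ Y s * exp (-∫ r in s..t, α r)
      + exp (∫ r in s..t, max (-α r) 0) * ∫ r in s..t, max (β r) 0 := by
  set A : ℝ → ℝ := fun r => ∫ u in s..r, α u
  set B := A t + ∫ r in s..t, max (-α r) 0
  have hZ : AbsolutelyContinuousOnInterval (fun r => Y r * exp (A r)) s t :=
    hY.fun_mul (contDiff_exp.locallyLipschitz.comp_absolutelyContinuousOnInterval
      (hα.absolutelyContinuousOnInterval_intervalIntegral left_mem_uIcc))
  have hderiv : ∀ᵐ r ∂volume.restrict (Icc s t),
      deriv (fun r => Y r * exp (A r)) r ≤ max (β r) 0 * exp B := by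
    rw [← restrict_Ioo_eq_restrict_Icc]
    filter_upwards [ae_restrict_of_ae hα.ae_hasDerivAt_integral,
      ae_restrict_of_ae hY.ae_differentiableAt, ae_restrict_of_ae hineq,
      ae_restrict_mem measurableSet_Ioo] with r hA hYd hr hrI
    have hrI' : r ∈ uIcc s t := Icc_subset_uIcc (Ioo_subset_Icc_self hrI)
    have hZd : HasDerivAt (fun r => Y r * exp (A r))
        (deriv Y r * exp (A r) + Y r * (exp (A r) * α r)) r :=
      (hYd hrI').hasDerivAt.mul (hA hrI' s left_mem_uIcc).exp
    rw [hZd.deriv]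
    calc deriv Y r * exp (A r) + Y r * (exp (A r) * α r)
        = (deriv Y r + α r * Y r) * exp (A r) := by ring
      _ ≤ max (β r) 0 * exp (A r) := by
        gcongr
        exact (hr hrI).trans (le_max_left _ _)
      _ ≤ max (β r) 0 * exp B := by
        gcongr
        exact intervalIntegral.integral_le_integral_add_integral_neg_part hrI.1.le hrI.2.le hα
  have hint := intervalIntegral.integral_mono_ae_restrict hst hZ.intervalIntegrable_deriv
    (hβ.pos_part.mul_const (exp B)) hderiv
  rw [hZ.integral_deriv_eq_sub, intervalIntegral.integral_mul_const] at hint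
  simp only [A, B, intervalIntegral.integral_same, exp_zero, mul_one, exp_add] at hint
  have hE := exp_pos (∫ r in s..t, α r)
  refine le_of_mul_le_mul_right ?_ hE
  rw [exp_neg]
  field_simp
  linarith

theorem le_of_eq_add_integral_of_ae_add_mul_le {Y Y' α β : ℝ → ℝ} {s t : ℝ} (hst : s ≤ t)
    (hY' : IntervalIntegrable Y' volume s t) (hY : ∀ r ∈ uIcc s t, Y r = Y s + ∫ u in s..r, Y' u)
    (hα : IntervalIntegrable α volume s t) (hβ : IntervalIntegrable β volume s t)
    (hineq : ∀ᵐ r, r ∈ Ioo s t → Y' r + α r * Y r ≤ β r) :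
    Y t ≤ Y s * exp (-∫ r in s..t, α r)
      + exp (∫ r in s..t, max (-α r) 0) * ∫ r in s..t, max (β r) 0 := by
  refine (absolutelyContinuousOnInterval_of_eq_add_integral hY' hY).le_of_ae_deriv_add_mul_le
    hst hα hβ ?_
  filter_upwards [ae_hasDerivAt_of_eq_add_integral hY' hY, hineq] with r hd hr hrI
  rw [(hd hrI).deriv]
  exact hr hrI

theorem le_pow_mul_add_div_of_le_mul_add {a : ℕ → ℝ} {θ c : ℝ} (hθ0 : 0 ≤ θ) (hθ1 : θ < 1)
    (hc : 0 ≤ c) (h : ∀ n, a (n + 1) ≤ θ * a n + c) (n : ℕ) :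
    a n ≤ θ ^ n * a 0 + c / (1 - θ) := by
  induction n with
  | zero => simpa using div_nonneg hc (sub_nonneg.2 hθ1.le)
  | succ n ih =>
    have h1θ : (1 - θ) ≠ 0 := (sub_pos.2 hθ1).ne'
    calc a (n + 1) ≤ θ * a n + c := h n
      _ ≤ θ * (θ ^ n * a 0 + c / (1 - θ)) + c := by gcongr
      _ = θ ^ (n + 1) * a 0 + c / (1 - θ) := by field_simp; ring

theorem exists_nat_sub_mul_mem_Ico {τ T u : ℝ} (hτ : 0 < τ) (hu : T ≤ u) :
    ∃ n : ℕ, u - n * τ ∈ Ico T (T + τ) := by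
  have hx : 0 ≤ (u - T) / τ := div_nonneg (sub_nonneg.2 hu) hτ.le
  refine ⟨⌊(u - T) / τ⌋₊, ?_, ?_⟩
  · have := (le_div_iff₀ hτ).1 (Nat.floor_le hx)
    linarith
  · have := (div_lt_iff₀ hτ).1 (Nat.lt_floor_add_one ((u - T) / τ))
    linarith

theorem tendsto_zero_of_le_mul_add {Y ε : ℝ → ℝ} {τ θ : ℝ} (hτ : 0 < τ) (hθ0 : 0 ≤ θ)
    (hθ1 : θ < 1) (hnn : ∀ᶠ t in atTop, 0 ≤ Y t)
    (hbdd : ∀ᶠ t in atTop, BddAbove (Y '' Icc t (t + τ)))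
    (hstep : ∀ᶠ t in atTop, Y (t + τ) ≤ θ * Y t + ε t) (hε : Tendsto ε atTop (𝓝 0)) :
    Tendsto Y atTop (𝓝 0) := by
  refine tendsto_order.2 ⟨fun a ha => hnn.mono fun t ht => ha.trans_le ht, fun δ hδ => ?_⟩
  have h1θ : 0 < 1 - θ := sub_pos.2 hθ1
  set c := (1 - θ) * δ / 2
  obtain ⟨T, hT⟩ := eventually_atTop.1 (hbdd.and (hstep.and
    (hε.eventually (ge_mem_nhds (show 0 < c by positivity)))))
  obtain ⟨C, hC⟩ := (hT T le_rfl).1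
  obtain ⟨N, hN⟩ := eventually_atTop.1 (((tendsto_pow_atTop_nhds_zero_of_lt_one hθ0 hθ1).mul_const
    C).eventually (gt_mem_nhds (show 0 * C < δ / 2 by linarith)))
  refine eventually_atTop.2 ⟨T + N * τ, fun u hu => ?_⟩
  obtain ⟨n, hn⟩ := exists_nat_sub_mul_mem_Ico hτ (show T ≤ u by nlinarith [N.cast_nonneg (α := ℝ)])
  have hNn : N ≤ n := by
    have : (N : ℝ) < n + 1 := by nlinarith [hn.2]
    exact Nat.lt_succ_iff.1 (by exact_mod_cast this)
  set t₀ := u - n * τ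
  have hiter := le_pow_mul_add_div_of_le_mul_add (a := fun k => Y (t₀ + k * τ)) (c := c) hθ0 hθ1
    (by positivity) (fun k => ?_) n
  · have hY₀ : Y t₀ ≤ C := hC ⟨t₀, Ico_subset_Icc_self hn, rfl⟩
    have hc : c / (1 - θ) = δ / 2 := by simp only [c]; field_simp
    simp only [t₀, sub_add_cancel, CharP.cast_eq_zero, zero_mul, add_zero, hc] at hiter
    calc Y u ≤ θ ^ n * Y t₀ + δ / 2 := hiter
      _ ≤ θ ^ n * C + δ / 2 := by gcongr
      _ < δ := by linarith [hN n hNn]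
  · obtain ⟨-, hstepk, hεk⟩ := hT (t₀ + k * τ) (by nlinarith [hn.1, k.cast_nonneg (α := ℝ)])
    rw [show t₀ + ↑(k + 1) * τ = t₀ + k * τ + τ by push_cast; ring]
    linarith

/-- Local absolute continuity of `Y` on `[0,∞)` is encoded as `Y t = Y 0 + ∫₀ᵗ Y'` with `Y'`
locally integrable. -/
theorem generalized_gronwall (τ γ : ℝ) (hτ : 0 < τ) (hγ : 0 < γ)
    (Y Y' α β : ℝ → ℝ)
    (hYnn : ∀ t : ℝ, 0 ≤ t → 0 ≤ Y t)
    (hY'int : ∀ a b : ℝ, 0 ≤ a → 0 ≤ b → IntervalIntegrable Y' volume a b)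
    (hαint : ∀ a b : ℝ, 0 ≤ a → 0 ≤ b → IntervalIntegrable α volume a b)
    (hβint : ∀ a b : ℝ, 0 ≤ a → 0 ≤ b → IntervalIntegrable β volume a b)
    (hFTC : ∀ t : ℝ, 0 ≤ t → Y t = Y 0 + ∫ s in (0 : ℝ)..t, Y' s)
    (hineq : ∀ᵐ t : ℝ ∂volume, t ∈ Set.Ioi (0 : ℝ) → Y' t + α t * Y t ≤ β t)
    (hliminf : ∀ ε : ℝ, 0 < ε → ∀ᶠ t in atTop, γ - ε ≤ ∫ s in t..(t + τ), α s)
    (hlimsup : ∃ M : ℝ, ∀ᶠ t in atTop, (∫ s in t..(t + τ), max (-α s) 0) ≤ M)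
    (hβlim : Tendsto (fun t : ℝ => ∫ s in t..(t + τ), max (β s) 0) atTop (nhds 0)) :
    Tendsto Y atTop (nhds 0) := by
  have hY : ∀ s t, 0 ≤ s → s ≤ t → ∀ r ∈ uIcc s t, Y r = Y s + ∫ u in s..r, Y' u := by
    intro s t hs hst r hr
    rw [uIcc_of_le hst] at hr
    rw [hFTC r (hs.trans hr.1), hFTC s hs, add_assoc,
      intervalIntegral.integral_add_adjacent_intervals (hY'int 0 s le_rfl hs)
        (hY'int s r hs (hs.trans hr.1))]
  obtain ⟨M, hM⟩ := hlimsup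
  have hε := hβlim.const_mul (exp M)
  rw [mul_zero] at hε
  refine tendsto_zero_of_le_mul_add hτ (exp_pos (-(γ / 2))).le (exp_lt_one_iff.2 (by linarith))
    (eventually_atTop.2 ⟨0, hYnn⟩) ?_ ?_ hε
  · filter_upwards [eventually_ge_atTop 0] with t ht
    have hAC := absolutelyContinuousOnInterval_of_eq_add_integral
      (hY'int t (t + τ) ht (by linarith)) (hY t (t + τ) ht (by linarith))
    exact isCompact_Icc.bddAbove_image (hAC.continuousOn.mono Icc_subset_uIcc)
  filter_upwards [hliminf (γ / 2) (half_pos hγ), hM, eventually_ge_atTop 0] with t hα hαneg ht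
  have htτ : t ≤ t + τ := by linarith
  calc Y (t + τ) ≤ _ := le_of_eq_add_integral_of_ae_add_mul_le htτ
        (hY'int t (t + τ) ht (ht.trans htτ)) (hY t (t + τ) ht htτ)
        (hαint t (t + τ) ht (ht.trans htτ)) (hβint t (t + τ) ht (ht.trans htτ))
        (hineq.mono fun r hr hrI => hr (ht.trans_lt hrI.1))
    _ ≤ Y t * exp (-(γ / 2)) + exp M * ∫ s in t..(t + τ), max (β s) 0 := by
      gcongr
      · exact hYnn t ht
      · linarith
      · exact intervalIntegral.integral_nonneg htτ fun x _ => le_max_right _ _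
    _ = _ := by ring
end
end
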